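/- Let A be a Hopf algebra over a field k, χ : A → k a unital algebra homomorphism, and d, e : A → k linear maps such that d(xy) = d(x)ε(y) + χ(x)d(y) and e(xy) = e(x)ε(y) + χ(S(x))e(y) for all x, y ∈ A (i.e. d is a χ-skew derivation and e is a (χ∘S)-skew derivation). Then the cup product η : A ⊗ A → k defined by η(x ⊗ y) = Σ e(x₁) χ(x₂) d(y) is a Hochschild 2-cocycle: ε(x)η(y ⊗ z) + η(x ⊗ yz) = η(x ⊗ y)ε(z) + η(xy ⊗ z) for all x, y, z ∈ A. -/

import Mathlib

open TensorProduct

/-- The convolution product of two linear maps from a coalgebra to an algebra. -/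
noncomputable def conv {k C B : Type*} [CommRing k]
    [AddCommGroup C] [Module k C] [Coalgebra k C]
    [Ring B] [Algebra k B] (f g : C →ₗ[k] B) : C →ₗ[k] B :=
  LinearMap.mul' k B ∘ₗ TensorProduct.map f g ∘ₗ Coalgebra.comul

/-- The cup product `η(x ⊗ y) = Σ e(x₁) χ(x₂) d(y) = (e * χ)(x)·d(y)` of the
1-cochains `e` and `d`. -/
noncomputable def cupProduct {k A : Type*} [Field k] [Ring A] [HopfAlgebra k A]
    (χ e d : A →ₗ[k] k) : A ⊗[k] A →ₗ[k] k :=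
  LinearMap.mul' k k ∘ₗ TensorProduct.map (conv e χ) d

section Aux

variable {k A : Type*} [Field k] [Ring A] [HopfAlgebra k A]

/-- `Σ ε(x₁) χ(x₂) = χ(x)`. -/
lemma conv_counit_apply (χ : A →ₐ[k] k) (x : A) :
    LinearMap.mul' k k (TensorProduct.map (Coalgebra.counit (R := k) (A := A))
      χ.toLinearMap (Coalgebra.comul x)) = χ x := by
  rw [← LinearMap.lTensor_comp_rTensor, LinearMap.comp_apply,
    Coalgebra.rTensor_counit_comul]
  simp

/-- `Σ χ(S(x₁)) χ(x₂) = ε(x)`. -/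
lemma conv_antipode_apply (χ : A →ₐ[k] k) (x : A) :
    LinearMap.mul' k k (TensorProduct.map
      (χ.toLinearMap ∘ₗ (HopfAlgebra.antipode k : A →ₗ[k] A)) χ.toLinearMap
      (Coalgebra.comul x)) = Coalgebra.counit (R := k) x := by
  have key : ∀ t : A ⊗[k] A,
      LinearMap.mul' k k (TensorProduct.map
        (χ.toLinearMap ∘ₗ (HopfAlgebra.antipode k : A →ₗ[k] A)) χ.toLinearMap t)
      = χ (LinearMap.mul' k A
          ((HopfAlgebra.antipode k : A →ₗ[k] A).rTensor A t)) := by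
    intro t
    induction t with
    | zero => simp
    | tmul a b => simp [LinearMap.rTensor_tmul]
    | add s t hs ht => simp [map_add, hs, ht]
  rw [key, HopfAlgebra.mul_antipode_rTensor_comul_apply]
  simp

/-- The key bilinear identity on tensors. -/
lemma mul_map_mul (χ : A →ₐ[k] k) (e : A →ₗ[k] k)
    (he : ∀ x y : A, e (x * y)
        = e x * Coalgebra.counit y + χ ((HopfAlgebra.antipode k : A →ₗ[k] A) x) * e y)
    (a b : A ⊗[k] A) :
    LinearMap.mul' k k (TensorProduct.map e χ.toLinearMap (a * b))
      = LinearMap.mul' k k (TensorProduct.map e χ.toLinearMap a)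
          * LinearMap.mul' k k (TensorProduct.map (Coalgebra.counit (R := k) (A := A))
              χ.toLinearMap b)
        + LinearMap.mul' k k (TensorProduct.map
            (χ.toLinearMap ∘ₗ (HopfAlgebra.antipode k : A →ₗ[k] A)) χ.toLinearMap a)
          * LinearMap.mul' k k (TensorProduct.map e χ.toLinearMap b) := by
  induction a with
  | zero => simp
  | add s t hs ht => simp only [add_mul, map_add, hs, ht]; ring
  | tmul x₁ x₂ =>
    induction b with
    | zero => simp
    | add s t hs ht => simp only [mul_add, map_add, hs, ht]; ring
    | tmul y₁ y₂ =>
      rw [Algebra.TensorProduct.tmul_mul_tmul]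
      simp only [TensorProduct.map_tmul, LinearMap.mul'_apply, LinearMap.coe_comp,
        Function.comp_apply, AlgHom.toLinearMap_apply, map_mul, he]
      ring

/-- `conv e χ` is a `(ε, χ)`-skew derivation. -/
lemma conv_mul (χ : A →ₐ[k] k) (e : A →ₗ[k] k)
    (he : ∀ x y : A, e (x * y)
        = e x * Coalgebra.counit y + χ ((HopfAlgebra.antipode k : A →ₗ[k] A) x) * e y)
    (x y : A) :
    conv e χ.toLinearMap (x * y)
      = conv e χ.toLinearMap x * χ y
        + Coalgebra.counit (R := k) x * conv e χ.toLinearMap y := by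
  simp only [conv, LinearMap.comp_apply, Bialgebra.comul_mul]
  rw [mul_map_mul χ e he, conv_counit_apply, conv_antipode_apply]

end Aux

/-- Let `A` be a Hopf algebra, `χ : A → k` a unital algebra homomorphism, `d` a `χ`-skew
derivation and `e` a `(χ∘S)`-skew derivation.  Then the cup product
`η(x ⊗ y) = Σ e(x₁) χ(x₂) d(y)` is a Hochschild 2-cocycle:
`ε(x)η(y⊗z) + η(x⊗yz) = η(x⊗y)ε(z) + η(xy⊗z)`. -/
theorem cupProduct_is_hochschild_cocycle {k A : Type*} [Field k] [Ring A] [HopfAlgebra k A]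
    (χ : A →ₐ[k] k) (d e : A →ₗ[k] k)
    (hd : ∀ x y : A, d (x * y) = d x * Coalgebra.counit y + χ x * d y)
    (he : ∀ x y : A, e (x * y)
        = e x * Coalgebra.counit y + χ ((HopfAlgebra.antipode k : A →ₗ[k] A) x) * e y) :
    ∀ x y z : A,
      Coalgebra.counit x * cupProduct χ.toLinearMap e d (y ⊗ₜ[k] z)
          + cupProduct χ.toLinearMap e d (x ⊗ₜ[k] (y * z))
        = cupProduct χ.toLinearMap e d (x ⊗ₜ[k] y) * Coalgebra.counit z
          + cupProduct χ.toLinearMap e d ((x * y) ⊗ₜ[k] z) := by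
  intro x y z
  simp only [cupProduct, LinearMap.comp_apply, TensorProduct.map_tmul,
    LinearMap.mul'_apply]
  rw [hd, conv_mul χ e he]
  ring
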